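/- For A of full row rank and a nonempty face F of Y⁰, the relative interior of the polyhedral cone S_F is ri S_F = {(λ,b,x) : λ > 0; x_i > 0 and A_iᵀ(b−Ax) = λ for i ∈ 𝒜⁺(F); x_i = 0 and −λ < A_iᵀ(b−Ax) < λ for i ∈ 𝒜⁰(F); x_i < 0 and A_iᵀ(b−Ax) = −λ for i ∈ 𝒜⁻(F)} = {(λ, Ax+λy, x) : λ > 0, x ∈ W(𝒜⁺(F), 𝒜⁰(F), 𝒜⁻(F)), y ∈ ri F}. -/

import Mathlib

open Set

noncomputable section

variable {m n : ℕ}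

/-- Euclidean distance between two vectors. -/
def en {k : ℕ} (x x' : Fin k → ℝ) : ℝ := Real.sqrt (∑ i, (x i - x' i) ^ 2)

/-- The ℓ₁ norm. -/
def l1 {k : ℕ} (x : Fin k → ℝ) : ℝ := ∑ i, |x i|

/-- Squared Euclidean norm. -/
def sqnorm {k : ℕ} (y : Fin k → ℝ) : ℝ := ∑ i, (y i) ^ 2

/-- `A_iᵀ y`, the dot product of the `i`-th column of `A` with `y`. -/
def colDot (A : Matrix (Fin m) (Fin n) ℝ) (i : Fin n) (y : Fin m → ℝ) : ℝ := ∑ k, A k i * y k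

/-- The dual feasible set `Y⁰ = {y : ‖Aᵀy‖_∞ ≤ 1}`. -/
def Ydual (A : Matrix (Fin m) (Fin n) ℝ) : Set (Fin m → ℝ) := {y | ∀ i, |colDot A i y| ≤ 1}

/-- `F` is a face of `C`: the argmax set of a linear functional over `C`. -/
def IsFaceOf (C F : Set (Fin m → ℝ)) : Prop :=
  ∃ v : Fin m → ℝ, F = {y | y ∈ C ∧ ∀ z ∈ C, ∑ k, v k * z k ≤ ∑ k, v k * y k}

/-- `𝒜⁺(F)`. -/
def Aplus (A : Matrix (Fin m) (Fin n) ℝ) (F : Set (Fin m → ℝ)) : Set (Fin n) :=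
  {i | ∀ y ∈ F, colDot A i y = 1}

/-- `𝒜⁻(F)`. -/
def Aminus (A : Matrix (Fin m) (Fin n) ℝ) (F : Set (Fin m → ℝ)) : Set (Fin n) :=
  {i | ∀ y ∈ F, colDot A i y = -1}

/-- `𝒜⁰(F)`. -/
def Azero (A : Matrix (Fin m) (Fin n) ℝ) (F : Set (Fin m → ℝ)) : Set (Fin n) :=
  {i | ∃ y ∈ F, -1 < colDot A i y ∧ colDot A i y < 1}

/-- Solution set of the extended ℓ₁ regularization problem:
basis pursuit when `lam = 0`, Lasso-type problem when `lam > 0`. -/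
def Sol (A : Matrix (Fin m) (Fin n) ℝ) (lam : ℝ) (b : Fin m → ℝ) : Set (Fin n → ℝ) :=
  if lam = 0 then
    {x | A.mulVec x = b ∧ ∀ z, A.mulVec z = b → l1 x ≤ l1 z}
  else
    {x | ∀ z, l1 x + 1 / (2 * lam) * sqnorm (A.mulVec x - b) ≤
          l1 z + 1 / (2 * lam) * sqnorm (A.mulVec z - b)}

/-- Graph of the solution multifunction `S`. -/
def gphS (A : Matrix (Fin m) (Fin n) ℝ) : Set (ℝ × (Fin m → ℝ) × (Fin n → ℝ)) :=
  {p | 0 ≤ p.1 ∧ p.2.2 ∈ Sol A p.1 p.2.1}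

/-- `A_iᵀ(b − Ax)`. -/
def resid (A : Matrix (Fin m) (Fin n) ℝ) (b : Fin m → ℝ) (x : Fin n → ℝ) (i : Fin n) : ℝ :=
  colDot A i (b - A.mulVec x)

/-- The polyhedral cone `S_F` associated with a face `F` of `Y⁰`. -/
def SFace (A : Matrix (Fin m) (Fin n) ℝ) (F : Set (Fin m → ℝ)) :
    Set (ℝ × (Fin m → ℝ) × (Fin n → ℝ)) :=
  {p | 0 ≤ p.1 ∧
    (∀ i ∈ Aplus A F, 0 ≤ p.2.2 i ∧ resid A p.2.1 p.2.2 i = p.1) ∧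
    (∀ i ∈ Azero A F, p.2.2 i = 0 ∧ |resid A p.2.1 p.2.2 i| ≤ p.1) ∧
    (∀ i ∈ Aminus A F, p.2.2 i ≤ 0 ∧ resid A p.2.1 p.2.2 i = -p.1)}

/-- `cl W(I⁺, I⁰, I⁻)`. -/
def clW (Ip I0 Im : Set (Fin n)) : Set (Fin n → ℝ) :=
  {x | (∀ i ∈ Ip, 0 ≤ x i) ∧ (∀ i ∈ I0, x i = 0) ∧ (∀ i ∈ Im, x i ≤ 0)}

/-- `W(I⁺, I⁰, I⁻)`. -/
def Wset (Ip I0 Im : Set (Fin n)) : Set (Fin n → ℝ) :=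
  {x | (∀ i ∈ Ip, 0 < x i) ∧ (∀ i ∈ I0, x i = 0) ∧ (∀ i ∈ Im, x i < 0)}

/-- The projection `D_F` of `S_F` onto the `(λ, b)` coordinates. -/
def DFace (A : Matrix (Fin m) (Fin n) ℝ) (F : Set (Fin m → ℝ)) : Set (ℝ × (Fin m → ℝ)) :=
  (fun p => (p.1, p.2.1)) '' SFace A F

/-- The convex subdifferential of the ℓ₁ norm. -/
def l1subdiff {k : ℕ} (x : Fin k → ℝ) : Set (Fin k → ℝ) :=
  {v | ∀ z, l1 x + ∑ i, v i * (z i - x i) ≤ l1 z}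

/-- Polyhedral subset of `ℝ × ℝ^m × ℝ^n`: a finite intersection of closed half-spaces. -/
def IsPolyhedral3 (s : Set (ℝ × (Fin m → ℝ) × (Fin n → ℝ))) : Prop :=
  ∃ (k : ℕ) (a : Fin k → ℝ × (Fin m → ℝ) × (Fin n → ℝ)) (β : Fin k → ℝ),
    s = {p | ∀ j, (a j).1 * p.1 + (∑ t, (a j).2.1 t * p.2.1 t) +
          (∑ t, (a j).2.2 t * p.2.2 t) ≤ β j}

/-- Lipschitz continuity of a set-valued map on a set `X`, with constant `κ`. -/
def LipOn {a b : ℕ} (G : (Fin a → ℝ) → Set (Fin b → ℝ)) (X : Set (Fin a → ℝ)) (κ : ℝ) : Prop :=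
  (∀ x ∈ X, (G x).Nonempty ∧ IsClosed (G x)) ∧
  ∀ x ∈ X, ∀ x' ∈ X, ∀ y' ∈ G x', ∃ y ∈ G x, en y' y ≤ κ * en x' x

end


noncomputable section
variable {m n : ℕ}

/-- dot product with `v` as a linear map. -/
def dotL (v : Fin m → ℝ) : (Fin m → ℝ) →ₗ[ℝ] ℝ where
  toFun y := ∑ k, v k * y k
  map_add' y z := by simp [mul_add, Finset.sum_add_distrib]
  map_smul' t y := by
    simp only [Pi.smul_apply, smul_eq_mul, RingHom.id_apply, Finset.mul_sum]
    exact Finset.sum_congr rfl fun k _ => by ring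

@[simp] lemma dotL_apply (v y : Fin m → ℝ) : dotL v y = ∑ k, v k * y k := rfl

lemma colDot_eq (A : Matrix (Fin m) (Fin n) ℝ) (i : Fin n) (y : Fin m → ℝ) :
    colDot A i y = dotL (fun k => A k i) y := rfl

lemma colDot_add (A : Matrix (Fin m) (Fin n) ℝ) (i : Fin n) (y z : Fin m → ℝ) :
    colDot A i (y + z) = colDot A i y + colDot A i z := by
  simp only [colDot_eq, map_add]

lemma colDot_sub (A : Matrix (Fin m) (Fin n) ℝ) (i : Fin n) (y z : Fin m → ℝ) :
    colDot A i (y - z) = colDot A i y - colDot A i z := by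
  simp only [colDot_eq, map_sub]

lemma colDot_smul (A : Matrix (Fin m) (Fin n) ℝ) (i : Fin n) (t : ℝ) (y : Fin m → ℝ) :
    colDot A i (t • y) = t * colDot A i y := by
  simp only [colDot_eq, map_smul, smul_eq_mul]

lemma exists_pos_forall {ι : Type*} [Fintype ι] (g : ι → ℝ) (hg : ∀ i, 0 < g i) :
    ∃ t : ℝ, 0 < t ∧ ∀ i, t ≤ g i := by
  rcases isEmpty_or_nonempty ι with h | h
  · exact ⟨1, one_pos, fun i => (IsEmpty.false i).elim⟩
  · refine ⟨Finset.univ.inf' Finset.univ_nonempty g, ?_,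
      fun i => Finset.inf'_le _ (Finset.mem_univ i)⟩
    rw [Finset.lt_inf'_iff]
    exact fun i _ => hg i

lemma riPoly {E : Type*} [NormedAddCommGroup E] [NormedSpace ℝ E] [FiniteDimensional ℝ E]
    {J : Type*} [Fintype J] (f : J → (E →ₗ[ℝ] ℝ)) (c : J → ℝ) (I : Set J)
    {P : Set E} (hP : P = {u | ∀ j, f j u ≤ c j})
    (h1 : ∀ j ∈ I, ∀ u ∈ P, f j u = c j)
    {u₀ : E} (h2a : ∀ j ∈ I, f j u₀ = c j) (h2b : ∀ j ∉ I, f j u₀ < c j) :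
    intrinsicInterior ℝ P = {u | (∀ j ∈ I, f j u = c j) ∧ ∀ j ∉ I, f j u < c j} := by
  classical
  have hmemP : ∀ u, ((∀ j ∈ I, f j u = c j) ∧ ∀ j ∉ I, f j u ≤ c j) → u ∈ P := by
    intro u hu
    rw [hP]
    intro j
    by_cases hj : j ∈ I
    · exact le_of_eq (hu.1 j hj)
    · exact hu.2 j hj
  have hu₀P : u₀ ∈ P := hmemP u₀ ⟨h2a, fun j hj => (h2b j hj).le⟩
  have hPle : ∀ u ∈ P, ∀ j, f j u ≤ c j := by rw [hP]; intro u hu; exact hu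
  have hu₀S : u₀ ∈ affineSpan ℝ P := subset_affineSpan ℝ P hu₀P
  -- the affine subspace of equality constraints
  set M : AffineSubspace ℝ E :=
    { carrier := {u | ∀ j ∈ I, f j u = c j}
      smul_vsub_vadd_mem' := by
        intro t p₁ p₂ p₃ h₁ h₂ h₃ j hj
        simp only [vsub_eq_sub, vadd_eq_add, map_add, map_smul, map_sub, smul_eq_mul,
          Set.mem_setOf_eq] at *
        rw [h₁ j hj, h₂ j hj, h₃ j hj]; ring } with hM
  have hPM : P ⊆ (M : Set E) := fun u hu j hj => h1 j hj u hu
  have hSM : affineSpan ℝ P ≤ M := affineSpan_le.2 hPM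
  have hMS : (M : Set E) ⊆ (affineSpan ℝ P : Set E) := by
    intro w hw
    obtain ⟨t, ht, htle⟩ := exists_pos_forall
      (fun j => if h : f j w ≤ c j then 1 else (c j - f j u₀) / (f j w - f j u₀)) (by
        intro j
        by_cases h : f j w ≤ c j
        · simp [h]
        · simp only [h, dif_neg, not_false_iff]
          have hcw : c j < f j w := lt_of_not_ge h
          have hjI : j ∉ I := fun hjI => h (le_of_eq (hw j hjI))
          have h0 : f j u₀ < c j := h2b j hjI
          exact div_pos (by linarith) (by linarith))
    have hpP : t • (w - u₀) + u₀ ∈ P := by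
      rw [hP]
      intro j
      have htj := htle j
      simp only [map_add, map_smul, map_sub, smul_eq_mul]
      by_cases h : f j w ≤ c j
      · simp only [h, dif_pos] at htj
        have h0 : f j u₀ ≤ c j := hPle u₀ hu₀P j
        nlinarith
      · simp only [h, dif_neg, not_false_iff] at htj
        have hcw : c j < f j w := lt_of_not_ge h
        have hjI : j ∉ I := fun hjI => h (le_of_eq (hw j hjI))
        have h0 : f j u₀ < c j := h2b j hjI
        have hd : (0:ℝ) < f j w - f j u₀ := by linarith
        have := (le_div_iff₀ hd).1 htj
        nlinarith
    have hpS : t • (w - u₀) + u₀ ∈ affineSpan ℝ P := subset_affineSpan ℝ P hpP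
    have hkey : w = (1/t) • ((t • (w - u₀) + u₀) -ᵥ u₀) +ᵥ u₀ := by
      rw [vsub_eq_sub, vadd_eq_add]
      rw [add_sub_cancel_right, smul_smul]
      rw [one_div, inv_mul_cancel₀ (ne_of_gt ht), one_smul]
      abel
    rw [hkey]
    exact AffineSubspace.smul_vsub_vadd_mem _ _ hpS hu₀S hu₀S
  have hspan : (affineSpan ℝ P : Set E) = {u | ∀ j ∈ I, f j u = c j} :=
    Subset.antisymm hSM hMS
  have hfc : ∀ j, Continuous (f j) := fun j => (f j).continuous_of_finiteDimensional
  apply Subset.antisymm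
  · -- ri P ⊆ strict set
    rintro u ⟨w, hwint, rfl⟩
    have hwP' := interior_subset hwint
    have hwP : (w : E) ∈ P := hwP'
    refine ⟨fun j hj => h1 j hj _ hwP, ?_⟩
    intro j hj
    have hle : f j (w : E) ≤ c j := hPle _ hwP j
    refine lt_of_le_of_ne hle ?_
    intro heq
    -- path t ↦ w + t (w - u₀)
    have hmem : ∀ t : ℝ, t • ((w : E) - u₀) + (w : E) ∈ affineSpan ℝ P := by
      intro t
      rw [← SetLike.mem_coe, hspan]
      intro k hk
      simp only [map_add, map_smul, map_sub, smul_eq_mul]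
      have h1' : f k (w : E) = c k := h1 k hk _ hwP
      rw [h1', h2a k hk]; ring
    set γ : ℝ → affineSpan ℝ P := fun t => ⟨t • ((w : E) - u₀) + (w : E), hmem t⟩ with hγ
    have hγcont : Continuous γ := by
      apply Continuous.subtype_mk
      exact (continuous_id.smul continuous_const).add continuous_const
    have hγ0 : γ 0 = w := by
      apply Subtype.ext; simp [hγ]
    have hnhds : γ ⁻¹' interior ((↑) ⁻¹' P : Set (affineSpan ℝ P)) ∈ nhds (0:ℝ) := by
      apply hγcont.continuousAt.preimage_mem_nhds
      rw [hγ0]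
      exact isOpen_interior.mem_nhds hwint
    obtain ⟨ε, hε, hball⟩ := Metric.mem_nhds_iff.1 hnhds
    have htmem : (ε/2 : ℝ) ∈ Metric.ball (0:ℝ) ε := by
      simp [Real.ball_eq_Ioo]; constructor <;> linarith
    have : γ (ε/2) ∈ ((↑) ⁻¹' P : Set (affineSpan ℝ P)) := interior_subset (hball htmem)
    have hPmem : (ε/2) • ((w : E) - u₀) + (w : E) ∈ P := this
    have := hPle _ hPmem j
    simp only [map_add, map_smul, map_sub, smul_eq_mul] at this
    have hu0j : f j u₀ < c j := h2b j hj
    nlinarith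
  · -- strict set ⊆ ri P
    intro u hu
    have huP : u ∈ P := hmemP u ⟨hu.1, fun j hj => (hu.2 j hj).le⟩
    have huS : u ∈ affineSpan ℝ P := subset_affineSpan ℝ P huP
    refine ⟨⟨u, huS⟩, ?_, rfl⟩
    apply mem_interior.2
    refine ⟨⋂ (j : {j : J // j ∉ I}), {w : affineSpan ℝ P | f j.1 (w : E) < c j.1}, ?_, ?_, ?_⟩
    · intro w hw
      simp only [Set.mem_iInter, Set.mem_setOf_eq] at hw
      show (w : E) ∈ P
      apply hmemP
      constructor
      · have := w.2; rw [← SetLike.mem_coe, hspan] at this; exact this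
      · exact fun j hj => (hw ⟨j, hj⟩).le
    · apply isOpen_iInter_of_finite
      intro j
      exact isOpen_lt ((hfc j.1).comp continuous_subtype_val) continuous_const
    · simp only [Set.mem_iInter, Set.mem_setOf_eq]
      exact fun j => hu.2 j.1 j.2

def fF (A : Matrix (Fin m) (Fin n) ℝ) (v : Fin m → ℝ) :
    Option (Fin n ⊕ Fin n) → ((Fin m → ℝ) →ₗ[ℝ] ℝ)
  | none => -(dotL v)
  | some (Sum.inl i) => dotL (fun k => A k i)
  | some (Sum.inr i) => -(dotL (fun k => A k i))

def cF (c₀ : ℝ) : Option (Fin n ⊕ Fin n) → ℝ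
  | none => -c₀
  | some _ => 1

def IF (A : Matrix (Fin m) (Fin n) ℝ) (F : Set (Fin m → ℝ)) : Set (Option (Fin n ⊕ Fin n)) :=
  {j | j = none ∨ (∃ i ∈ Aplus A F, j = some (Sum.inl i)) ∨
      (∃ i ∈ Aminus A F, j = some (Sum.inr i))}

@[simp] lemma IF_none (A : Matrix (Fin m) (Fin n) ℝ) (F : Set (Fin m → ℝ)) :
    none ∈ IF A F := Or.inl rfl

@[simp] lemma IF_inl (A : Matrix (Fin m) (Fin n) ℝ) (F : Set (Fin m → ℝ)) (i : Fin n) :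
    some (Sum.inl i) ∈ IF A F ↔ i ∈ Aplus A F := by
  simp [IF]

@[simp] lemma IF_inr (A : Matrix (Fin m) (Fin n) ℝ) (F : Set (Fin m → ℝ)) (i : Fin n) :
    some (Sum.inr i) ∈ IF A F ↔ i ∈ Aminus A F := by
  simp [IF]

lemma riF_main (A : Matrix (Fin m) (Fin n) ℝ) (F : Set (Fin m → ℝ))
    (hface : IsFaceOf (Ydual A) F) (hne : F.Nonempty) :
    (intrinsicInterior ℝ F = {y | (∀ i ∈ Aplus A F, colDot A i y = 1) ∧
        (∀ i ∈ Aminus A F, colDot A i y = -1) ∧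
        ∀ i ∈ Azero A F, -1 < colDot A i y ∧ colDot A i y < 1}) ∧
    (∃ y₀, y₀ ∈ F ∧ (∀ i ∉ Aplus A F, colDot A i y₀ < 1) ∧
      (∀ i ∉ Aminus A F, -1 < colDot A i y₀)) ∧
    (∀ i, i ∉ Aplus A F → i ∉ Aminus A F → i ∈ Azero A F) ∧
    (∀ i ∈ Aplus A F, i ∉ Aminus A F) ∧
    (∀ i ∈ Azero A F, i ∉ Aplus A F ∧ i ∉ Aminus A F) := by
  classical
  obtain ⟨v, hF⟩ := hface
  obtain ⟨y₁, hy₁⟩ := hne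
  have hFY : F ⊆ Ydual A := by rw [hF]; exact fun y hy => hy.1
  have hmax : ∀ z ∈ Ydual A, dotL v z ≤ dotL v y₁ := by
    rw [hF] at hy₁
    intro z hz
    simpa using hy₁.2 z hz
  have hconst : ∀ y ∈ F, dotL v y = dotL v y₁ := by
    intro y hy
    have h1 : dotL v y₁ ≤ dotL v y := by
      rw [hF] at hy; simpa using hy.2 y₁ (hFY hy₁)
    exact le_antisymm (hmax y (hFY hy)) h1
  have hFeq : F = {y | (∀ i, |colDot A i y| ≤ 1) ∧ dotL v y₁ ≤ dotL v y} := by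
    ext y; constructor
    · intro hy; exact ⟨hFY hy, (hconst y hy).ge⟩
    · intro hy
      rw [hF]
      refine ⟨hy.1, fun z hz => le_trans ?_ hy.2⟩
      simpa using hmax z hz
  have hPnM : ∀ i ∈ Aplus A F, i ∉ Aminus A F := by
    intro i hp hm
    have h1 := hp y₁ hy₁; have h2 := hm y₁ hy₁; rw [h1] at h2; norm_num at h2
  have h0nPM : ∀ i ∈ Azero A F, i ∉ Aplus A F ∧ i ∉ Aminus A F := by
    rintro i ⟨y, hyF, hlt1, hlt2⟩
    constructor
    · intro hp; have := hp y hyF; linarith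
    · intro hm; have := hm y hyF; linarith
  have hconv : Convex ℝ F := by
    rw [hFeq]
    intro y hy z hz a b ha hb hab
    constructor
    · intro i
      have hc : colDot A i (a • y + b • z) = a * colDot A i y + b * colDot A i z := by
        rw [colDot_add, colDot_smul, colDot_smul]
      rw [hc]
      have h1 := hy.1 i; have h2 := hz.1 i
      calc |a * colDot A i y + b * colDot A i z|
          ≤ |a * colDot A i y| + |b * colDot A i z| := abs_add_le _ _
        _ = a * |colDot A i y| + b * |colDot A i z| := by
            rw [abs_mul, abs_mul, abs_of_nonneg ha, abs_of_nonneg hb]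
        _ ≤ a * 1 + b * 1 := by nlinarith
        _ = 1 := by rw [mul_one, mul_one, hab]
    · have hc : dotL v (a • y + b • z) = a * dotL v y + b * dotL v z := by
        rw [map_add, map_smul, map_smul]; simp
      rw [hc]
      calc dotL v y₁ = a * dotL v y₁ + b * dotL v y₁ := by rw [← add_mul, hab, one_mul]
        _ ≤ a * dotL v y + b * dotL v z :=
            add_le_add (mul_le_mul_of_nonneg_left hy.2 ha) (mul_le_mul_of_nonneg_left hz.2 hb)
  have existsP : ∀ i : Fin n, ∃ y, y ∈ F ∧ colDot A i y ≤ 1 ∧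
      (i ∉ Aplus A F → colDot A i y < 1) := by
    intro i
    by_cases hp : i ∈ Aplus A F
    · exact ⟨y₁, hy₁, (abs_le.1 ((hFY hy₁) i)).2, fun h => absurd hp h⟩
    · have hp' : ∃ y ∈ F, colDot A i y ≠ 1 := by
        by_contra h
        push_neg at h
        exact hp h
      obtain ⟨y, hyF, hy1⟩ := hp'
      have hy1' : colDot A i y ≤ 1 := (abs_le.1 (hFY hyF i)).2
      exact ⟨y, hyF, hy1', fun _ => lt_of_le_of_ne hy1' hy1⟩
  have existsM : ∀ i : Fin n, ∃ y, y ∈ F ∧ -1 ≤ colDot A i y ∧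
      (i ∉ Aminus A F → -1 < colDot A i y) := by
    intro i
    by_cases hp : i ∈ Aminus A F
    · exact ⟨y₁, hy₁, (abs_le.1 ((hFY hy₁) i)).1, fun h => absurd hp h⟩
    · have hp' : ∃ y ∈ F, colDot A i y ≠ -1 := by
        by_contra h
        push_neg at h
        exact hp h
      obtain ⟨y, hyF, hy1⟩ := hp'
      have hy1' : -1 ≤ colDot A i y := (abs_le.1 (hFY hyF i)).1
      exact ⟨y, hyF, hy1', fun _ => lt_of_le_of_ne hy1' (Ne.symm hy1)⟩
  choose yP hyPF hyPle hyPlt using existsP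
  choose yM hyMF hyMle hyMlt using existsM
  have hcover : ∀ i, i ∉ Aplus A F → i ∉ Aminus A F → i ∈ Azero A F := by
    intro i hp hm
    have hmid : (1/2 : ℝ) • yP i + (1/2 : ℝ) • yM i ∈ F :=
      hconv (hyPF i) (hyMF i) (by norm_num) (by norm_num) (by norm_num)
    refine ⟨_, hmid, ?_, ?_⟩ <;> rw [colDot_add, colDot_smul, colDot_smul]
    · have h1 := hyPle i; have h2 := hyMlt i hm
      have h3 := (abs_le.1 (hFY (hyPF i) i)).1
      linarith
    · have h1 := hyPlt i hp; have h2 := hyMle i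
      have h3 := (abs_le.1 (hFY (hyMF i) i)).2
      linarith
  -- the strict point y₀
  set J := Option (Fin n ⊕ Fin n) with hJ
  set N : ℝ := (Fintype.card J : ℝ) with hN
  have hNpos : 0 < N := by
    rw [hN]
    exact_mod_cast Fintype.card_pos
  set z : J → (Fin m → ℝ) := fun j => match j with
    | none => y₁
    | some (Sum.inl i) => yP i
    | some (Sum.inr i) => yM i with hz
  have hzF : ∀ j, z j ∈ F := by
    intro j
    rcases j with _ | (i | i)
    · exact hy₁
    · exact hyPF i
    · exact hyMF i
  set y₀ : Fin m → ℝ := ∑ j : J, N⁻¹ • z j with hy₀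
  have hy₀F : y₀ ∈ F := by
    apply hconv.sum_mem (fun j _ => by positivity)
    · rw [Finset.sum_const, Finset.card_univ, nsmul_eq_mul, mul_inv_cancel₀ hNpos.ne']
    · exact fun j _ => hzF j
  have hy₀col : ∀ i, colDot A i y₀ = ∑ j : J, N⁻¹ * colDot A i (z j) := by
    intro i
    rw [hy₀, colDot_eq, map_sum]
    exact Finset.sum_congr rfl fun j _ => by rw [map_smul, smul_eq_mul, colDot_eq]
  have hsum1 : ∑ _j : J, N⁻¹ * 1 = 1 := by
    rw [Finset.sum_const, Finset.card_univ, nsmul_eq_mul]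
    field_simp
    rw [hN]
  have hy₀P : ∀ i ∉ Aplus A F, colDot A i y₀ < 1 := by
    intro i hp
    rw [hy₀col i, ← hsum1]
    apply Finset.sum_lt_sum
    · intro j _
      have : colDot A i (z j) ≤ 1 := (abs_le.1 (hFY (hzF j) i)).2
      nlinarith [inv_pos.2 hNpos]
    · refine ⟨some (Sum.inl i), Finset.mem_univ _, ?_⟩
      have : colDot A i (z (some (Sum.inl i))) < 1 := hyPlt i hp
      nlinarith [inv_pos.2 hNpos]
  have hy₀M : ∀ i ∉ Aminus A F, -1 < colDot A i y₀ := by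
    intro i hm
    have h1 : ∑ _j : J, N⁻¹ * (-1) = -1 := by
      rw [Finset.sum_const, Finset.card_univ, nsmul_eq_mul]
      field_simp
      rw [hN]
    rw [hy₀col i, ← h1]
    apply Finset.sum_lt_sum
    · intro j _
      have : -1 ≤ colDot A i (z j) := (abs_le.1 (hFY (hzF j) i)).1
      nlinarith [inv_pos.2 hNpos]
    · refine ⟨some (Sum.inr i), Finset.mem_univ _, ?_⟩
      have : -1 < colDot A i (z (some (Sum.inr i))) := hyMlt i hm
      nlinarith [inv_pos.2 hNpos]
  refine ⟨?_, ⟨y₀, hy₀F, hy₀P, hy₀M⟩, hcover, hPnM, h0nPM⟩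
  -- apply the polyhedral relative interior computation
  have hPF : F = {u | ∀ j, fF A v j u ≤ cF (dotL v y₁) j} := by
    rw [hFeq]
    ext y
    simp only [mem_setOf_eq]
    constructor
    · rintro ⟨habs, hge⟩ (_ | (i | i))
      · show -(dotL v) y ≤ -(dotL v y₁)
        simp only [neg_le_neg_iff]
        exact hge
      · show dotL (fun k => A k i) y ≤ 1
        rw [← colDot_eq]
        exact (abs_le.1 (habs i)).2
      · show -(dotL (fun k => A k i)) y ≤ 1
        rw [← colDot_eq]
        have := (abs_le.1 (habs i)).1
        linarith
    · intro h
      constructor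
      · intro i
        have h1 : dotL (fun k => A k i) y ≤ 1 := h (some (Sum.inl i))
        have h2 : -(dotL (fun k => A k i)) y ≤ 1 := h (some (Sum.inr i))
        rw [colDot_eq, abs_le]
        exact ⟨by linarith, h1⟩
      · have h0 : -(dotL v) y ≤ -(dotL v y₁) := h none
        simp only [neg_le_neg_iff] at h0
        exact h0
  have h1F : ∀ j ∈ IF A F, ∀ u ∈ F, fF A v j u = cF (dotL v y₁) j := by
    rintro (_ | (i | i)) hj u hu
    · show -(dotL v) u = -(dotL v y₁)
      simp only [neg_inj]
      exact hconst u hu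
    · rw [IF_inl] at hj
      show dotL (fun k => A k i) u = 1
      rw [← colDot_eq]
      exact hj u hu
    · rw [IF_inr] at hj
      show -(dotL (fun k => A k i)) u = 1
      rw [← colDot_eq, hj u hu]
      norm_num
  have h2bF : ∀ j ∉ IF A F, fF A v j y₀ < cF (dotL v y₁) j := by
    rintro (_ | (i | i)) hj
    · exact absurd (IF_none A F) hj
    · rw [IF_inl] at hj
      show dotL (fun k => A k i) y₀ < 1
      rw [← colDot_eq]
      exact hy₀P i hj
    · rw [IF_inr] at hj
      show -(dotL (fun k => A k i)) y₀ < 1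
      rw [← colDot_eq]
      have := hy₀M i hj
      linarith
  have hri := riPoly (fF A v) (cF (dotL v y₁)) (IF A F) hPF h1F
      (fun j hj => h1F j hj y₀ hy₀F) h2bF
  rw [hri]
  ext y
  simp only [mem_setOf_eq]
  constructor
  · rintro ⟨heq, hst⟩
    refine ⟨?_, ?_, ?_⟩
    · intro i hi
      have h := heq (some (Sum.inl i)) (by simp [hi])
      rw [colDot_eq]
      exact h
    · intro i hi
      have h : -(dotL (fun k => A k i)) y = 1 := heq (some (Sum.inr i)) (by simp [hi])
      rw [colDot_eq]
      linarith
    · intro i hi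
      obtain ⟨hp, hm⟩ := h0nPM i hi
      have h1 : dotL (fun k => A k i) y < 1 := hst (some (Sum.inl i)) (by simp [hp])
      have h2 : -(dotL (fun k => A k i)) y < 1 := hst (some (Sum.inr i)) (by simp [hm])
      rw [colDot_eq]
      exact ⟨by linarith, h1⟩
  · rintro ⟨hP1, hM1, h01⟩
    -- y is dual feasible
    have hyY : y ∈ Ydual A := by
      intro i
      by_cases hp : i ∈ Aplus A F
      · rw [hP1 i hp]; norm_num
      · by_cases hm : i ∈ Aminus A F
        · rw [hM1 i hm]; norm_num
        · obtain ⟨ha, hb⟩ := h01 i (hcover i hp hm)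
          rw [abs_le]
          exact ⟨ha.le, hb.le⟩
    -- the perturbation argument: dotL v y = dotL v y₁
    have hvdy : dotL v y = dotL v y₁ := by
      obtain ⟨t, ht, htle⟩ := exists_pos_forall
        (fun i => if |colDot A i y₀| < 1 then
            (1 - |colDot A i y₀|) / (1 + |colDot A i y₀ - colDot A i y|) else 1) (by
          intro i
          by_cases h : |colDot A i y₀| < 1
          · simp only [h, if_true]
            apply div_pos (by linarith) (by positivity)
          · simp [h])
      have hwY : y₀ + t • (y₀ - y) ∈ Ydual A := by
        intro i
        have hcw : colDot A i (y₀ + t • (y₀ - y)) =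
            colDot A i y₀ + t * (colDot A i y₀ - colDot A i y) := by
          rw [colDot_add, colDot_smul, colDot_sub]
        rw [hcw]
        by_cases hp : i ∈ Aplus A F
        · rw [hp y₀ hy₀F, hP1 i hp]
          norm_num
        · by_cases hm : i ∈ Aminus A F
          · rw [hm y₀ hy₀F, hM1 i hm]
            norm_num
          · have habs0 : |colDot A i y₀| < 1 := abs_lt.2 ⟨hy₀M i hm, hy₀P i hp⟩
            have htle' := htle i
            simp only [habs0, if_true] at htle'
            have hd0 : (0:ℝ) < 1 + |colDot A i y₀ - colDot A i y| := by positivity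
            have hkey : t * (1 + |colDot A i y₀ - colDot A i y|) ≤ 1 - |colDot A i y₀| :=
              (le_div_iff₀ hd0).1 htle'
            calc |colDot A i y₀ + t * (colDot A i y₀ - colDot A i y)|
                ≤ |colDot A i y₀| + |t * (colDot A i y₀ - colDot A i y)| := abs_add_le _ _
              _ = |colDot A i y₀| + t * |colDot A i y₀ - colDot A i y| := by
                  rw [abs_mul, abs_of_pos ht]
              _ ≤ 1 := by nlinarith [abs_nonneg (colDot A i y₀ - colDot A i y)]
      have hvw := hmax _ hwY
      have hexp : dotL v (y₀ + t • (y₀ - y)) =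
          dotL v y₀ + t * (dotL v y₀ - dotL v y) := by
        rw [map_add, map_smul, map_sub, smul_eq_mul]
      rw [hexp, hconst y₀ hy₀F] at hvw
      have hle1 : dotL v y₁ ≤ dotL v y := by nlinarith
      exact le_antisymm (hmax y hyY) hle1
    constructor
    · rintro (_ | (i | i)) hj
      · show -(dotL v) y = -(dotL v y₁)
        simp only [neg_inj]
        exact hvdy
      · rw [IF_inl] at hj
        show dotL (fun k => A k i) y = 1
        rw [← colDot_eq]
        exact hP1 i hj
      · rw [IF_inr] at hj
        show -(dotL (fun k => A k i)) y = 1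
        rw [← colDot_eq, hM1 i hj]
        norm_num
    · rintro (_ | (i | i)) hj
      · exact absurd (IF_none A F) hj
      · rw [IF_inl] at hj
        show dotL (fun k => A k i) y < 1
        rw [← colDot_eq]
        by_cases hm : i ∈ Aminus A F
        · rw [hM1 i hm]; norm_num
        · exact (h01 i (hcover i hj hm)).2
      · rw [IF_inr] at hj
        show -(dotL (fun k => A k i)) y < 1
        rw [← colDot_eq]
        by_cases hp : i ∈ Aplus A F
        · rw [hP1 i hp]; norm_num
        · have := (h01 i (hcover i hp hj)).1
          linarith

def lamL : (ℝ × (Fin m → ℝ) × (Fin n → ℝ)) →ₗ[ℝ] ℝ where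
  toFun p := p.1
  map_add' _ _ := rfl
  map_smul' _ _ := rfl

def xL (i : Fin n) : (ℝ × (Fin m → ℝ) × (Fin n → ℝ)) →ₗ[ℝ] ℝ where
  toFun p := p.2.2 i
  map_add' _ _ := rfl
  map_smul' _ _ := rfl

def residL (A : Matrix (Fin m) (Fin n) ℝ) (i : Fin n) :
    (ℝ × (Fin m → ℝ) × (Fin n → ℝ)) →ₗ[ℝ] ℝ where
  toFun p := resid A p.2.1 p.2.2 i
  map_add' p q := by
    show colDot A i ((p.2.1 + q.2.1) - A.mulVec (p.2.2 + q.2.2)) = _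
    rw [Matrix.mulVec_add, show p.2.1 + q.2.1 - (A.mulVec p.2.2 + A.mulVec q.2.2)
      = (p.2.1 - A.mulVec p.2.2) + (q.2.1 - A.mulVec q.2.2) from by abel, colDot_add]
    rfl
  map_smul' t p := by
    show colDot A i (t • p.2.1 - A.mulVec (t • p.2.2)) = _
    rw [Matrix.mulVec_smul, show t • p.2.1 - t • A.mulVec p.2.2
      = t • (p.2.1 - A.mulVec p.2.2) from by rw [smul_sub], colDot_smul]
    rfl

@[simp] lemma lamL_apply (p : ℝ × (Fin m → ℝ) × (Fin n → ℝ)) : lamL p = p.1 := rfl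
@[simp] lemma xL_apply (i : Fin n) (p : ℝ × (Fin m → ℝ) × (Fin n → ℝ)) :
    xL i p = p.2.2 i := rfl
@[simp] lemma residL_apply (A : Matrix (Fin m) (Fin n) ℝ) (i : Fin n)
    (p : ℝ × (Fin m → ℝ) × (Fin n → ℝ)) : residL A i p = resid A p.2.1 p.2.2 i := rfl

open Classical in
def fS (A : Matrix (Fin m) (Fin n) ℝ) (F : Set (Fin m → ℝ)) :
    Option (Fin n × Fin 4) → ((ℝ × (Fin m → ℝ) × (Fin n → ℝ)) →ₗ[ℝ] ℝ)
  | none => -lamL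
  | some (i, k) =>
    if i ∈ Aplus A F then ![-(xL i), residL A i - lamL, lamL - residL A i, 0] k
    else if i ∈ Aminus A F then ![xL i, residL A i + lamL, -lamL - residL A i, 0] k
    else ![xL i, -(xL i), residL A i - lamL, -(residL A i) - lamL] k

open Classical in
def cS (A : Matrix (Fin m) (Fin n) ℝ) (F : Set (Fin m → ℝ)) : Option (Fin n × Fin 4) → ℝ
  | none => 0
  | some (i, k) => if i ∈ Aplus A F ∨ i ∈ Aminus A F then ![0,0,0,1] k else 0

def IS (A : Matrix (Fin m) (Fin n) ℝ) (F : Set (Fin m → ℝ)) : Set (Option (Fin n × Fin 4)) :=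
  {j | ∃ i k, j = some (i, k) ∧
    ((i ∈ Aplus A F ∨ i ∈ Aminus A F) ∧ (k = 1 ∨ k = 2) ∨
     (i ∉ Aplus A F ∧ i ∉ Aminus A F) ∧ (k = 0 ∨ k = 1))}

@[simp] lemma IS_none (A : Matrix (Fin m) (Fin n) ℝ) (F : Set (Fin m → ℝ)) :
    none ∉ IS A F := by simp [IS]

@[simp] lemma IS_some (A : Matrix (Fin m) (Fin n) ℝ) (F : Set (Fin m → ℝ))
    (i : Fin n) (k : Fin 4) :
    some (i, k) ∈ IS A F ↔
      ((i ∈ Aplus A F ∨ i ∈ Aminus A F) ∧ (k = 1 ∨ k = 2) ∨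
       (i ∉ Aplus A F ∧ i ∉ Aminus A F) ∧ (k = 0 ∨ k = 1)) := by
  constructor
  · rintro ⟨i', k', h, hc⟩
    obtain ⟨rfl, rfl⟩ : i = i' ∧ k = k' := by simpa using h
    exact hc
  · intro hc
    exact ⟨i, k, rfl, hc⟩

lemma resid_shift (A : Matrix (Fin m) (Fin n) ℝ) (x : Fin n → ℝ) (t : ℝ) (y : Fin m → ℝ)
    (i : Fin n) : resid A (A.mulVec x + t • y) x i = t * colDot A i y := by
  rw [resid, show A.mulVec x + t • y - A.mulVec x = t • y from by abel, colDot_smul]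

lemma resid_shift1 (A : Matrix (Fin m) (Fin n) ℝ) (x : Fin n → ℝ) (y : Fin m → ℝ)
    (i : Fin n) : resid A (A.mulVec x + y) x i = colDot A i y := by
  rw [resid, show A.mulVec x + y - A.mulVec x = y from by abel]

lemma riS_main (A : Matrix (Fin m) (Fin n) ℝ) (F : Set (Fin m → ℝ))
    (hface : IsFaceOf (Ydual A) F) (hne : F.Nonempty) :
    intrinsicInterior ℝ (SFace A F) =
      {p : ℝ × (Fin m → ℝ) × (Fin n → ℝ) | 0 < p.1 ∧
        (∀ i ∈ Aplus A F, 0 < p.2.2 i ∧ resid A p.2.1 p.2.2 i = p.1) ∧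
        (∀ i ∈ Azero A F, p.2.2 i = 0 ∧
          -p.1 < resid A p.2.1 p.2.2 i ∧ resid A p.2.1 p.2.2 i < p.1) ∧
        (∀ i ∈ Aminus A F, p.2.2 i < 0 ∧ resid A p.2.1 p.2.2 i = -p.1)} := by
  classical
  obtain ⟨hri, ⟨y₀, hy₀F, hy₀P, hy₀M⟩, hcover, hPnM, h0nPM⟩ := riF_main A F hface hne
  have hcolP : ∀ i ∈ Aplus A F, colDot A i y₀ = 1 := fun i hi => hi y₀ hy₀F
  have hcolM : ∀ i ∈ Aminus A F, colDot A i y₀ = -1 := fun i hi => hi y₀ hy₀F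
  -- membership criteria for IS
  have hIS₁ : ∀ (i : Fin n) (k : Fin 4), i ∈ Aplus A F →
      (some (i, k) ∈ IS A F ↔ (k = 1 ∨ k = 2)) := by
    intro i k hip; rw [IS_some]; tauto
  have hIS₂ : ∀ (i : Fin n) (k : Fin 4), i ∈ Aminus A F →
      (some (i, k) ∈ IS A F ↔ (k = 1 ∨ k = 2)) := by
    intro i k him; rw [IS_some]; tauto
  have hIS₀ : ∀ (i : Fin n) (k : Fin 4), i ∉ Aplus A F → i ∉ Aminus A F →
      (some (i, k) ∈ IS A F ↔ (k = 0 ∨ k = 1)) := by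
    intro i k hip him; rw [IS_some]; tauto
  -- the polyhedral description
  have hPS : SFace A F = {p | ∀ j, fS A F j p ≤ cS A F j} := by
    ext p
    simp only [mem_setOf_eq]
    constructor
    · rintro ⟨h0, hP, h0', hM⟩ j
      rcases j with _ | ⟨i, k⟩
      · simpa [fS, cS] using h0
      · by_cases hip : i ∈ Aplus A F
        · obtain ⟨hx, hr⟩ := hP i hip
          simp only [fS, cS, if_pos hip, if_pos (Or.inl hip : i ∈ Aplus A F ∨ i ∈ Aminus A F)]
          fin_cases k <;> simp <;> linarith
        · by_cases him : i ∈ Aminus A F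
          · obtain ⟨hx, hr⟩ := hM i him
            simp only [fS, cS, if_neg hip, if_pos him,
              if_pos (Or.inr him : i ∈ Aplus A F ∨ i ∈ Aminus A F)]
            fin_cases k <;> simp <;> linarith
          · obtain ⟨hx, hr⟩ := h0' i (hcover i hip him)
            obtain ⟨hr1, hr2⟩ := abs_le.1 hr
            simp only [fS, cS, if_neg hip, if_neg him,
              if_neg (by tauto : ¬(i ∈ Aplus A F ∨ i ∈ Aminus A F))]
            fin_cases k <;> simp <;> linarith
    · intro h
      have h0 : 0 ≤ p.1 := by simpa [fS, cS] using h none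
      refine ⟨h0, ?_, ?_, ?_⟩
      · intro i hip
        have h1 := h (some (i, 0)); have h2 := h (some (i, 1)); have h3 := h (some (i, 2))
        simp only [fS, cS, if_pos hip,
          if_pos (Or.inl hip : i ∈ Aplus A F ∨ i ∈ Aminus A F)] at h1 h2 h3
        simp at h1 h2 h3
        exact ⟨h1, by linarith⟩
      · intro i hi0
        obtain ⟨hip, him⟩ := h0nPM i hi0
        have h1 := h (some (i, 0)); have h2 := h (some (i, 1))
        have h3 := h (some (i, 2)); have h4 := h (some (i, 3))
        simp only [fS, cS, if_neg hip, if_neg him,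
          if_neg (by tauto : ¬(i ∈ Aplus A F ∨ i ∈ Aminus A F))] at h1 h2 h3 h4
        simp at h1 h2 h3 h4
        exact ⟨le_antisymm h1 h2, abs_le.2 ⟨by linarith, by linarith⟩⟩
      · intro i him
        have hip : i ∉ Aplus A F := fun hp' => hPnM i hp' him
        have h1 := h (some (i, 0)); have h2 := h (some (i, 1)); have h3 := h (some (i, 2))
        simp only [fS, cS, if_neg hip, if_pos him,
          if_pos (Or.inr him : i ∈ Aplus A F ∨ i ∈ Aminus A F)] at h1 h2 h3
        simp at h1 h2 h3
        exact ⟨h1, by linarith⟩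
  -- equality constraints hold on SFace
  have h1S : ∀ j ∈ IS A F, ∀ p ∈ SFace A F, fS A F j p = cS A F j := by
    intro j hj p hp
    rcases j with _ | ⟨i, k⟩
    · exact absurd hj (IS_none A F)
    · by_cases hip : i ∈ Aplus A F
      · have hk : k = 1 ∨ k = 2 := (hIS₁ i k hip).1 hj
        have hr := (hp.2.1 i hip).2
        simp only [fS, cS, if_pos hip, if_pos (Or.inl hip : i ∈ Aplus A F ∨ i ∈ Aminus A F)]
        rcases hk with rfl | rfl <;> simp <;> linarith
      · by_cases him : i ∈ Aminus A F
        · have hk : k = 1 ∨ k = 2 := (hIS₂ i k him).1 hj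
          have hr := (hp.2.2.2 i him).2
          simp only [fS, cS, if_neg hip, if_pos him,
            if_pos (Or.inr him : i ∈ Aplus A F ∨ i ∈ Aminus A F)]
          rcases hk with rfl | rfl <;> simp <;> linarith
        · have hk : k = 0 ∨ k = 1 := (hIS₀ i k hip him).1 hj
          have hx := (hp.2.2.1 i (hcover i hip him)).1
          simp only [fS, cS, if_neg hip, if_neg him,
            if_neg (by tauto : ¬(i ∈ Aplus A F ∨ i ∈ Aminus A F))]
          rcases hk with rfl | rfl <;> simp [hx]
  -- the strict point
  set x₀ : Fin n → ℝ := fun i =>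
    if i ∈ Aplus A F then 1 else if i ∈ Aminus A F then -1 else 0 with hx₀
  set p₀ : ℝ × (Fin m → ℝ) × (Fin n → ℝ) := (1, A.mulVec x₀ + (1:ℝ) • y₀, x₀) with hp₀def
  have hres : ∀ i, resid A p₀.2.1 p₀.2.2 i = colDot A i y₀ := by
    intro i
    show resid A (A.mulVec x₀ + (1:ℝ) • y₀) x₀ i = _
    rw [resid_shift, one_mul]
  have hp₀ : p₀ ∈ SFace A F := by
    refine ⟨by norm_num [hp₀def], ?_, ?_, ?_⟩
    · intro i hip
      rw [hres i, hcolP i hip]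
      have : p₀.2.2 i = 1 := by simp [hp₀def, hx₀, hip]
      rw [this]
      norm_num [hp₀def]
    · intro i hi0
      obtain ⟨hip, him⟩ := h0nPM i hi0
      rw [hres i]
      have : p₀.2.2 i = 0 := by simp [hp₀def, hx₀, hip, him]
      rw [this]
      have h1 := hy₀P i hip; have h2 := hy₀M i him
      refine ⟨rfl, ?_⟩
      show |colDot A i y₀| ≤ p₀.1
      have : p₀.1 = 1 := rfl
      rw [this, abs_le]
      exact ⟨by linarith, by linarith⟩
    · intro i him
      have hip : i ∉ Aplus A F := fun hp' => hPnM i hp' him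
      rw [hres i, hcolM i him]
      have : p₀.2.2 i = -1 := by simp [hp₀def, hx₀, hip, him]
      rw [this]
      norm_num [hp₀def]
  have h2bS : ∀ j ∉ IS A F, fS A F j p₀ < cS A F j := by
    intro j hj
    rcases j with _ | ⟨i, k⟩
    · show -lamL p₀ < 0
      simp [hp₀def]
    · by_cases hip : i ∈ Aplus A F
      · have hk : ¬(k = 1 ∨ k = 2) := fun h => hj ((hIS₁ i k hip).2 h)
        simp only [fS, cS, if_pos hip, if_pos (Or.inl hip : i ∈ Aplus A F ∨ i ∈ Aminus A F)]
        fin_cases k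
        · simp [hp₀def, hx₀, hip]
        · exact absurd (Or.inl rfl) hk
        · exact absurd (Or.inr rfl) hk
        · simp
      · by_cases him : i ∈ Aminus A F
        · have hk : ¬(k = 1 ∨ k = 2) := fun h => hj ((hIS₂ i k him).2 h)
          simp only [fS, cS, if_neg hip, if_pos him,
            if_pos (Or.inr him : i ∈ Aplus A F ∨ i ∈ Aminus A F)]
          fin_cases k
          · simp [hp₀def, hx₀, hip, him]
          · exact absurd (Or.inl rfl) hk
          · exact absurd (Or.inr rfl) hk
          · simp
        · have hk : ¬(k = 0 ∨ k = 1) := fun h => hj ((hIS₀ i k hip him).2 h)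
          simp only [fS, cS, if_neg hip, if_neg him,
            if_neg (by tauto : ¬(i ∈ Aplus A F ∨ i ∈ Aminus A F))]
          have h1 := hy₀P i hip; have h2 := hy₀M i him
          fin_cases k
          · exact absurd (Or.inl rfl) hk
          · exact absurd (Or.inr rfl) hk
          · simp [hp₀def, resid_shift1]
            linarith
          · simp [hp₀def, resid_shift1]
            linarith
  have hriS := riPoly (fS A F) (cS A F) (IS A F) hPS h1S
      (fun j hj => h1S j hj p₀ hp₀) h2bS
  rw [hriS]
  ext p
  simp only [mem_setOf_eq]
  constructor
  · rintro ⟨heq, hst⟩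
    have hlam : 0 < p.1 := by
      have := hst none (IS_none A F)
      simpa [fS, cS] using this
    refine ⟨hlam, ?_, ?_, ?_⟩
    · intro i hip
      have h1 := hst (some (i, 0)) (by rw [hIS₁ i _ hip]; decide)
      have h2 := heq (some (i, 1)) ((hIS₁ i _ hip).2 (Or.inl rfl))
      simp only [fS, cS, if_pos hip,
        if_pos (Or.inl hip : i ∈ Aplus A F ∨ i ∈ Aminus A F)] at h1 h2
      simp at h1 h2
      exact ⟨h1, by linarith⟩
    · intro i hi0
      obtain ⟨hip, him⟩ := h0nPM i hi0
      have h1 := heq (some (i, 0)) ((hIS₀ i _ hip him).2 (Or.inl rfl))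
      have h3 := hst (some (i, 2)) (by rw [hIS₀ i _ hip him]; decide)
      have h4 := hst (some (i, 3)) (by rw [hIS₀ i _ hip him]; decide)
      simp only [fS, cS, if_neg hip, if_neg him,
        if_neg (by tauto : ¬(i ∈ Aplus A F ∨ i ∈ Aminus A F))] at h1 h3 h4
      simp at h1 h3 h4
      exact ⟨h1, by linarith, by linarith⟩
    · intro i him
      have hip : i ∉ Aplus A F := fun hp' => hPnM i hp' him
      have h1 := hst (some (i, 0)) (by rw [hIS₂ i _ him]; decide)
      have h2 := heq (some (i, 1)) ((hIS₂ i _ him).2 (Or.inl rfl))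
      simp only [fS, cS, if_neg hip, if_pos him,
        if_pos (Or.inr him : i ∈ Aplus A F ∨ i ∈ Aminus A F)] at h1 h2
      simp at h1 h2
      exact ⟨h1, by linarith⟩
  · rintro ⟨hlam, hP, h0', hM⟩
    have hpSF : p ∈ SFace A F := by
      refine ⟨hlam.le, ?_, ?_, ?_⟩
      · exact fun i hip => ⟨(hP i hip).1.le, (hP i hip).2⟩
      · intro i hi0
        obtain ⟨hx, hr1, hr2⟩ := h0' i hi0
        exact ⟨hx, abs_le.2 ⟨by linarith, by linarith⟩⟩
      · exact fun i him => ⟨(hM i him).1.le, (hM i him).2⟩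
    refine ⟨fun j hj => h1S j hj p hpSF, ?_⟩
    intro j hj
    rcases j with _ | ⟨i, k⟩
    · show -lamL p < 0
      simpa using hlam
    · by_cases hip : i ∈ Aplus A F
      · have hk : ¬(k = 1 ∨ k = 2) := fun h => hj ((hIS₁ i k hip).2 h)
        obtain ⟨hx, hr⟩ := hP i hip
        simp only [fS, cS, if_pos hip, if_pos (Or.inl hip : i ∈ Aplus A F ∨ i ∈ Aminus A F)]
        fin_cases k
        · simpa using hx
        · exact absurd (Or.inl rfl) hk
        · exact absurd (Or.inr rfl) hk
        · simp
      · by_cases him : i ∈ Aminus A F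
        · have hk : ¬(k = 1 ∨ k = 2) := fun h => hj ((hIS₂ i k him).2 h)
          obtain ⟨hx, hr⟩ := hM i him
          simp only [fS, cS, if_neg hip, if_pos him,
            if_pos (Or.inr him : i ∈ Aplus A F ∨ i ∈ Aminus A F)]
          fin_cases k
          · simpa using hx
          · exact absurd (Or.inl rfl) hk
          · exact absurd (Or.inr rfl) hk
          · simp
        · have hk : ¬(k = 0 ∨ k = 1) := fun h => hj ((hIS₀ i k hip him).2 h)
          obtain ⟨hx, hr1, hr2⟩ := h0' i (hcover i hip him)
          simp only [fS, cS, if_neg hip, if_neg him,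
            if_neg (by tauto : ¬(i ∈ Aplus A F ∨ i ∈ Aminus A F))]
          fin_cases k
          · exact absurd (Or.inl rfl) hk
          · exact absurd (Or.inr rfl) hk
          · simp
            linarith
          · simp
            linarith


end

theorem stmt10 {m n : ℕ} (A : Matrix (Fin m) (Fin n) ℝ) (hrank : A.rank = m)
    (F : Set (Fin m → ℝ)) (hface : IsFaceOf (Ydual A) F) (hne : F.Nonempty) :
    (intrinsicInterior ℝ (SFace A F) =
      {p : ℝ × (Fin m → ℝ) × (Fin n → ℝ) | 0 < p.1 ∧
        (∀ i ∈ Aplus A F, 0 < p.2.2 i ∧ resid A p.2.1 p.2.2 i = p.1) ∧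
        (∀ i ∈ Azero A F, p.2.2 i = 0 ∧
          -p.1 < resid A p.2.1 p.2.2 i ∧ resid A p.2.1 p.2.2 i < p.1) ∧
        (∀ i ∈ Aminus A F, p.2.2 i < 0 ∧ resid A p.2.1 p.2.2 i = -p.1)}) ∧
    (intrinsicInterior ℝ (SFace A F) =
      {p | ∃ lam : ℝ, 0 < lam ∧
        ∃ x ∈ Wset (Aplus A F) (Azero A F) (Aminus A F), ∃ y ∈ intrinsicInterior ℝ F,
          p = (lam, A.mulVec x + lam • y, x)}) := by
  obtain ⟨hriF, -, hcover, hPnM, h0nPM⟩ := riF_main A F hface hne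
  have hS := riS_main A F hface hne
  refine ⟨hS, ?_⟩
  rw [hS]
  ext p
  obtain ⟨l, b, x⟩ := p
  simp only [mem_setOf_eq]
  constructor
  · rintro ⟨hlam, hP, h0', hM⟩
    have hinv : 0 < l⁻¹ := inv_pos.2 hlam
    refine ⟨l, hlam, x, ⟨fun i hi => (hP i hi).1, fun i hi => (h0' i hi).1,
      fun i hi => (hM i hi).1⟩, l⁻¹ • (b - A.mulVec x), ?_, ?_⟩
    · rw [hriF]
      refine ⟨?_, ?_, ?_⟩
      · intro i hi
        rw [colDot_smul, ← resid, (hP i hi).2, inv_mul_cancel₀ hlam.ne']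
      · intro i hi
        rw [colDot_smul, ← resid, (hM i hi).2, mul_neg, inv_mul_cancel₀ hlam.ne']
      · intro i hi
        obtain ⟨-, hr1, hr2⟩ := h0' i hi
        rw [colDot_smul, ← resid]
        constructor
        · have h := mul_lt_mul_of_pos_left hr1 hinv
          rwa [mul_neg, inv_mul_cancel₀ hlam.ne'] at h
        · have h := mul_lt_mul_of_pos_left hr2 hinv
          rwa [inv_mul_cancel₀ hlam.ne'] at h
    · have hb : A.mulVec x + l • (l⁻¹ • (b - A.mulVec x)) = b := by
        rw [smul_inv_smul₀ hlam.ne']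
        abel
      rw [hb]
  · rintro ⟨lam, hlam, x', ⟨hxP, hx0, hxM⟩, y, hy, heq⟩
    rw [hriF] at hy
    obtain ⟨hyP, hyM, hy0⟩ := hy
    obtain ⟨h1', h2', h3'⟩ : l = lam ∧ b = A.mulVec x' + lam • y ∧ x = x' := by
      rw [Prod.ext_iff, Prod.ext_iff] at heq
      exact ⟨heq.1, heq.2.1, heq.2.2⟩
    subst h1'; subst h3'; subst h2'
    have hr : ∀ i, resid A (A.mulVec x + l • y) x i = l * colDot A i y :=
      fun i => resid_shift A x l y i
    refine ⟨hlam, ?_, ?_, ?_⟩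
    · intro i hi
      refine ⟨hxP i hi, ?_⟩
      show resid A (A.mulVec x + l • y) x i = l
      rw [hr i, hyP i hi, mul_one]
    · intro i hi
      obtain ⟨h1, h2⟩ := hy0 i hi
      refine ⟨hx0 i hi, ?_, ?_⟩
      · show -l < resid A (A.mulVec x + l • y) x i
        rw [hr i]
        nlinarith
      · show resid A (A.mulVec x + l • y) x i < l
        rw [hr i]
        nlinarith
    · intro i hi
      refine ⟨hxM i hi, ?_⟩
      show resid A (A.mulVec x + l • y) x i = -l
      rw [hr i, hyM i hi, mul_neg_one]
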